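/- Let α > 0 and β > 0. For every n ∈ ℕ the following two polynomial identities hold: P_{n+1}(x;α,β) − A_n P_n(x;α,β) = (x−1)·G_n(x;(α−1)/2,(β+1)/2) (Christoffel transformation with parameter 1), and P_n(x;α,β) = G_n(x;(α−1)/2,(β+1)/2) − C_n G_{n−1}(x;(α−1)/2,(β+1)/2) (Geronimus transformation), where A_n = (n+β+1)/(2n+α+β+2) for n even, A_n = (n+α+β+1)/(2n+α+β+2) for n odd, C_n = n/(2n+α+β) for n even, and C_n = (n+α)/(2n+α+β) for n odd. -/
import Mathlib


open Polynomial

/-- The coefficient `Aₙ` of the monic little `-1` Jacobi recurrence. -/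
noncomputable def littleM1A (α β : ℝ) (n : ℕ) : ℝ :=
  if Even n then ((n : ℝ) + β + 1) / (2 * (n : ℝ) + α + β + 2)
  else ((n : ℝ) + α + β + 1) / (2 * (n : ℝ) + α + β + 2)

/-- The coefficient `Cₙ` of the monic little `-1` Jacobi recurrence. -/
noncomputable def littleM1C (α β : ℝ) (n : ℕ) : ℝ :=
  if Even n then (n : ℝ) / (2 * (n : ℝ) + α + β)
  else ((n : ℝ) + α) / (2 * (n : ℝ) + α + β)

/-- Monic little `-1` Jacobi polynomials, shifted so that `littleM1Jacobi α β (n+1) = Pₙ`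
(`littleM1Jacobi α β 0 = P₋₁ = 0`).  The recurrence is
`P_{n+1} = (x - (1 - Aₙ - Cₙ)) Pₙ - Aₙ₋₁ Cₙ P_{n-1}`. -/
noncomputable def littleM1Jacobi (α β : ℝ) : ℕ → Polynomial ℝ
  | 0 => 0
  | 1 => 1
  | (k + 2) =>
      (X - C (1 - littleM1A α β k - littleM1C α β k)) * littleM1Jacobi α β (k + 1)
        - C (littleM1A α β (k - 1) * littleM1C α β k) * littleM1Jacobi α β k

/-- `σₙ`, the recurrence coefficients of the monic generalized Gegenbauer polynomials. -/
noncomputable def genGegenbauerSigma (α β : ℝ) (n : ℕ) : ℝ :=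
  let m : ℕ := n / 2
  if Even n then
    (m : ℝ) * ((m : ℝ) + β) / ((2 * (m : ℝ) + α + β) * (2 * (m : ℝ) + α + β + 1))
  else
    ((m : ℝ) + α + 1) * ((m : ℝ) + α + β + 1) /
      ((2 * (m : ℝ) + α + β + 1) * (2 * (m : ℝ) + α + β + 2))

/-- Monic generalized Gegenbauer polynomials, shifted so that
`genGegenbauer α β (n+1) = Gₙ` (`genGegenbauer α β 0 = G₋₁ = 0`). -/
noncomputable def genGegenbauer (α β : ℝ) : ℕ → Polynomial ℝ
  | 0 => 0
  | 1 => 1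
  | (k + 2) =>
      X * genGegenbauer α β (k + 1) - C (genGegenbauerSigma α β k) * genGegenbauer α β k

lemma key1 (α β : ℝ) (hα : α > 0) (hβ : β > 0) (n : ℕ) :
    littleM1C α β (n+1) = 1 - littleM1A α β n := by
  have hn : (0:ℝ) ≤ (n:ℝ) := Nat.cast_nonneg n
  have hd : 2*(n:ℝ)+α+β+2 ≠ 0 := by positivity
  rcases Nat.even_or_odd n with h | h
  · have h1 : ¬ Even (n+1) := by simp [Nat.even_add_one, h]
    simp only [littleM1A, littleM1C, if_pos h, if_neg h1]
    push_cast; field_simp; ring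
  · have h1 : Even (n+1) := Odd.add_one h
    simp only [littleM1A, littleM1C, if_pos h1, if_neg (Nat.not_even_iff_odd.mpr h)]
    push_cast; field_simp; ring

lemma key2 (α β : ℝ) (hα : α > 0) (hβ : β > 0) (n : ℕ) :
    genGegenbauerSigma ((α-1)/2) ((β+1)/2) n = littleM1A α β n * littleM1C α β n := by
  rcases Nat.even_or_odd n with ⟨m, hm⟩ | ⟨m, hm⟩
  · have hm' : n = 2*m := by omega
    subst hm'
    have hmc : (0:ℝ) ≤ (m:ℝ) := Nat.cast_nonneg m
    have he : Even (2*m) := even_two_mul m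
    have d1 : 2*(m:ℝ) + (α-1)/2 + (β+1)/2 ≠ 0 := by intro h; nlinarith
    have d2 : 2*(m:ℝ) + (α-1)/2 + (β+1)/2 + 1 ≠ 0 := by intro h; nlinarith
    have d3 : 2*((2*m:ℕ):ℝ) + α + β ≠ 0 := by push_cast; intro h; nlinarith
    have d4 : 2*((2*m:ℕ):ℝ) + α + β + 2 ≠ 0 := by push_cast; intro h; nlinarith
    simp only [genGegenbauerSigma, littleM1A, littleM1C, if_pos he,
      Nat.mul_div_cancel_left m (by norm_num : 0 < 2)]
    rw [div_mul_div_comm, div_eq_div_iff (mul_ne_zero d1 d2) (mul_ne_zero d4 d3)]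
    push_cast
    ring
  · have hm' : n = 2*m+1 := hm
    subst hm'
    have hmc : (0:ℝ) ≤ (m:ℝ) := Nat.cast_nonneg m
    have ho : ¬ Even (2*m+1) := by simp [Nat.even_add_one]
    have hdiv : (2*m+1)/2 = m := by omega
    have d1 : 2*(m:ℝ) + (α-1)/2 + (β+1)/2 + 1 ≠ 0 := by intro h; nlinarith
    have d2 : 2*(m:ℝ) + (α-1)/2 + (β+1)/2 + 2 ≠ 0 := by intro h; nlinarith
    have d3 : 2*((2*m+1:ℕ):ℝ) + α + β ≠ 0 := by push_cast; intro h; nlinarith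
    have d4 : 2*((2*m+1:ℕ):ℝ) + α + β + 2 ≠ 0 := by push_cast; intro h; nlinarith
    simp only [genGegenbauerSigma, littleM1A, littleM1C, if_neg ho, hdiv]
    rw [div_mul_div_comm, div_eq_div_iff (mul_ne_zero d1 d2) (mul_ne_zero d4 d3)]
    push_cast
    ring


/-- the little `-1` Jacobi polynomials `Pₙ(x;α,β)` and the generalized
Gegenbauer polynomials `Gₙ(x;(α-1)/2,(β+1)/2)` are kernel partners with parameter 1:
`P_{n+1} - Aₙ Pₙ = (x-1) Gₙ` (Christoffel) and `Pₙ = Gₙ - Cₙ G_{n-1}` (Geronimus). -/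
theorem littleM1Jacobi_genGegenbauer_kernel_partners
    (α β : ℝ) (hα : α > 0) (hβ : β > 0) (n : ℕ) :
    littleM1Jacobi α β (n + 2) - C (littleM1A α β n) * littleM1Jacobi α β (n + 1) =
        (X - 1) * genGegenbauer ((α - 1) / 2) ((β + 1) / 2) (n + 1) ∧
    littleM1Jacobi α β (n + 1) =
        genGegenbauer ((α - 1) / 2) ((β + 1) / 2) (n + 1)
          - C (littleM1C α β n) * genGegenbauer ((α - 1) / 2) ((β + 1) / 2) n := by
  set α' := (α - 1) / 2
  set β' := (β + 1) / 2
  induction n with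
  | zero =>
      have hC0 : littleM1C α β 0 = 0 := by simp [littleM1C]
      constructor
      · show (X - C (1 - littleM1A α β 0 - littleM1C α β 0)) * 1
            - C (littleM1A α β (0-1) * littleM1C α β 0) * 0
            - C (littleM1A α β 0) * 1 = (X - 1) * 1
        rw [hC0]
        simp only [map_sub, map_mul, map_zero, map_one]
        ring
      · show (1 : Polynomial ℝ) = 1 - C (littleM1C α β 0) * 0
        rw [hC0]; simp
  | succ k ih =>
      obtain ⟨h1, h2⟩ := ih
      have hk1 : littleM1C α β (k+1) = 1 - littleM1A α β k := key1 α β hα hβ k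
      have hk2 : genGegenbauerSigma α' β' k = littleM1A α β k * littleM1C α β k :=
        key2 α β hα hβ k
      have hrec : genGegenbauer α' β' (k+2) =
          X * genGegenbauer α' β' (k+1) - C (genGegenbauerSigma α' β' k) * genGegenbauer α' β' k := rfl
      have e2 : littleM1Jacobi α β (k+2) =
          genGegenbauer α' β' (k+2) - C (littleM1C α β (k+1)) * genGegenbauer α' β' (k+1) := by
        rw [hrec, hk2, hk1]
        simp only [map_sub, map_mul, map_one]
        linear_combination h1 + C (littleM1A α β k) * h2
      refine ⟨?_, e2⟩
      have hJ3 : littleM1Jacobi α β (k+3) =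
          (X - C (1 - littleM1A α β (k+1) - littleM1C α β (k+1))) * littleM1Jacobi α β (k+2)
            - C (littleM1A α β k * littleM1C α β (k+1)) * littleM1Jacobi α β (k+1) := rfl
      rw [hJ3, e2, h2, hrec, hk2, hk1]
      simp only [map_sub, map_mul, map_one]
      ring
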